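/- Let 𝒯 be a Krull–Schmidt, Hom-finite, 2-Calabi–Yau triangulated category over an algebraically closed field k and R a basic maximal rigid object of 𝒯. Then an object X ∈ 𝒯 is maximal R[1]-rigid with respect to pr(R) if and only if X is a maximal rigid object of 𝒯. -/

import Mathlib

/-!
Formalization of results from "Relative rigid objects in triangulated categories"
by Fu–Geng–Liu.  Throughout, `C` is a Krull–Schmidt, Hom-finite, `k`-linear
triangulated category over an algebraically closed field `k` (Krull–Schmidt is
encoded as: Hom-finite over `k` together with idempotent completeness), with
suspension functor `⟦1⟧`.
-/

open CategoryTheory Limits Pretriangulated Opposite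

universe w v u

namespace RelRigid

variable {k : Type w} [Field k] [IsAlgClosed k]
variable {C : Type u} [Category.{v} C] [Preadditive C] [CategoryTheory.Linear k C]
  [HasZeroObject C] [HasShift C ℤ] [∀ n : ℤ, (shiftFunctor C n).Additive]
  [Pretriangulated C] [HasFiniteBiproducts C] [IsIdempotentComplete C]
  [∀ X Y : C, Module.Finite k (X ⟶ Y)]

/-- `X` belongs to `add R`: it is a direct summand of a finite direct sum of copies of `R`. -/
def InAdd (R X : C) : Prop :=
  ∃ (n : ℕ) (s : X ⟶ ⨁ (fun _ : Fin n => R)) (p : (⨁ (fun _ : Fin n => R)) ⟶ X),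
    s ≫ p = 𝟙 X

/-- `Y` is a direct summand of `X`. -/
def IsSummand (Y X : C) : Prop := ∃ (s : Y ⟶ X) (p : X ⟶ Y), s ≫ p = 𝟙 Y

/-- The morphism `f` factors through `add Z`. -/
def FactorsThroughAdd (Z : C) {X Y : C} (f : X ⟶ Y) : Prop :=
  ∃ (Z' : C) (_ : InAdd Z Z') (g : X ⟶ Z') (h : Z' ⟶ Y), g ≫ h = f

/-- `X` is rigid: `Hom(X, X[1]) = 0`. -/
def IsRigidObj (X : C) : Prop := ∀ f : X ⟶ X⟦(1 : ℤ)⟧, f = 0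

/-- `X` is `R[1]`-rigid: `R[1](X, X[1]) = 0`, i.e. every morphism `X ⟶ X[1]`
factoring through `add (R[1])` vanishes. -/
def IsRelRigid (R X : C) : Prop :=
  ∀ f : X ⟶ X⟦(1 : ℤ)⟧, FactorsThroughAdd (R⟦(1 : ℤ)⟧) f → f = 0

/-- `X ∈ pr(R)`: there is a triangle `R₁ ⟶ R₀ ⟶ X ⟶ R₁[1]` with `R₀, R₁ ∈ add R`. -/
def InPr (R X : C) : Prop :=
  ∃ (R₁ R₀ : C) (_ : InAdd R R₁) (_ : InAdd R R₀) (f : R₁ ⟶ R₀) (g : R₀ ⟶ X)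
    (h : X ⟶ R₁⟦(1 : ℤ)⟧), Triangle.mk f g h ∈ distTriang C

/-- `X` is maximal `R[1]`-rigid with respect to `pr(R)`: `X ∈ pr(R)` is `R[1]`-rigid and
any `Z ∈ pr(R)` with `R[1](X ⊕ Z, (X ⊕ Z)[1]) = 0` satisfies `Z ∈ add X`. -/
def IsMaxRelRigid (R X : C) : Prop :=
  InPr R X ∧ IsRelRigid R X ∧ ∀ Z : C, InPr R Z → IsRelRigid R (X ⊞ Z) → InAdd X Z

/-- `X` is indecomposable. -/
def Indecomp (X : C) : Prop :=
  ¬ IsZero X ∧ ∀ A B : C, Nonempty (X ≅ A ⊞ B) → IsZero A ∨ IsZero B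

/-- `f` is a decomposition of `X` into indecomposable objects. -/
def IsDecomp (X : C) {n : ℕ} (f : Fin n → C) : Prop :=
  (∀ i, Indecomp (f i)) ∧ Nonempty (X ≅ ⨁ f)

/-- `|X| = n`: `X` has exactly `n` pairwise non-isomorphic indecomposable direct summands. -/
def NumIndec (X : C) (n : ℕ) : Prop :=
  ∃ g : Fin n → C, (∀ i, Indecomp (g i)) ∧ (∀ i j : Fin n, Nonempty (g i ≅ g j) → i = j) ∧
    ∀ Y : C, Indecomp Y → (IsSummand Y X ↔ ∃ i : Fin n, Nonempty (Y ≅ g i))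

/-- `X` is basic: it decomposes into pairwise non-isomorphic indecomposable objects. -/
def IsBasic (X : C) : Prop :=
  ∃ (n : ℕ) (f : Fin n → C), IsDecomp X f ∧ ∀ i j : Fin n, Nonempty (f i ≅ f j) → i = j

/-- `Hom(R, Y)` is a left module over `End (op R)` (equivalently, a right module over the
endomorphism algebra `Γ = End R`), via precomposition. -/
instance homModule (R Y : C) : Module (End (op R)) (R ⟶ Y) where
  smul g f := g.unop ≫ f
  one_smul f := by show (1 : End (op R)).unop ≫ f = f; simp [End.one_def]
  mul_smul g h f := by
    show (g * h).unop ≫ f = g.unop ≫ h.unop ≫ f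
    simp [End.mul_def]
  smul_zero g := by show g.unop ≫ (0 : _ ⟶ _) = 0; simp
  smul_add g f₁ f₂ := by
    show g.unop ≫ (f₁ + f₂) = g.unop ≫ f₁ + g.unop ≫ f₂
    simp
  add_smul g h f := by
    show (g + h).unop ≫ f = g.unop ≫ f + h.unop ≫ f
    rw [show (g + h).unop = g.unop + h.unop from rfl, Preadditive.add_comp]
  zero_smul f := by show (0 : End (op R)).unop ≫ f = 0; simp

/-- Postcomposition `Hom(R, X) → Hom(R, Y)` with `φ : X ⟶ Y`, i.e. the action of the
functor `Hom(R, −)` on morphisms; it is linear over `End (op R)`. -/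
def homMap (R : C) {X Y : C} (φ : X ⟶ Y) : (R ⟶ X) →ₗ[End (op R)] (R ⟶ Y) where
  toFun u := u ≫ φ
  map_add' u v := by simp [Preadditive.add_comp]
  map_smul' g u := by
    show (g.unop ≫ u) ≫ φ = g.unop ≫ (u ≫ φ)
    simp [Category.assoc]

/-- `T` is a cluster tilting object:
`add T = {X : Hom(T, X[1]) = 0} = {X : Hom(X, T[1]) = 0}`. -/
def IsClusterTilting (T : C) : Prop :=
  (∀ X : C, InAdd T X ↔ ∀ f : T ⟶ X⟦(1 : ℤ)⟧, f = 0) ∧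
  (∀ X : C, InAdd T X ↔ ∀ f : X ⟶ T⟦(1 : ℤ)⟧, f = 0)

/-- `T` is maximal `R[1]`-rigid with respect to the whole category `C`. -/
def IsMaxRelRigidAll (R T : C) : Prop :=
  IsRelRigid R T ∧ ∀ Z : C, IsRelRigid R (T ⊞ Z) → InAdd T Z

/-- `T` is `R[1]`-cluster tilting: `T` is `R[1]`-rigid and `|T| = |R|`. -/
def IsRelClusterTilting (R T : C) : Prop :=
  IsRelRigid R T ∧ ∃ n : ℕ, NumIndec T n ∧ NumIndec R n

/-- `S` is presilting: `Hom(S, S[i]) = 0` for all `i > 0`. -/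
def IsPresilting (S : C) : Prop := ∀ i : ℤ, 0 < i → ∀ f : S ⟶ S⟦i⟧, f = 0

/-- A predicate on objects defines a thick subcategory: closed under isomorphisms,
shifts, extensions (cones) and direct summands. -/
def IsThickClosed (P : C → Prop) : Prop :=
  (∀ X Y : C, (X ≅ Y) → P X → P Y) ∧
  (∀ (X : C) (n : ℤ), P X → P (X⟦n⟧)) ∧
  (∀ T : Triangle C, T ∈ (distTriang C) → P T.obj₁ → P T.obj₂ → P T.obj₃) ∧
  (∀ X Y : C, IsSummand Y X → P X → P Y)

/-- The smallest thick subcategory of `C` containing `S` is `C` itself. -/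
def ThickGenerates (S : C) : Prop :=
  ∀ P : C → Prop, IsThickClosed P → P S → ∀ X : C, P X

/-- `S` is silting: presilting and `thick S = C`. -/
def IsSilting (S : C) : Prop := IsPresilting S ∧ ThickGenerates S

/-- `C` is `n`-Calabi–Yau: there are bifunctorial isomorphisms
`Hom(X, Y) ≅ D Hom(Y, X[n])`, encoded by a perfect pairing
`Hom(X, Y) × Hom(Y, X[n]) → k` which is natural in both variables. -/
def IsCalabiYau (n : ℤ) : Prop :=
  ∃ pair : ∀ X Y : C, (X ⟶ Y) →ₗ[k] ((Y ⟶ X⟦n⟧) →ₗ[k] k),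
    (∀ X Y : C, Function.Bijective (pair X Y)) ∧
    (∀ (X' X Y : C) (u : X' ⟶ X) (f : X ⟶ Y) (g : Y ⟶ X'⟦n⟧),
      pair X' Y (u ≫ f) g = pair X Y f (g ≫ (shiftFunctor C n).map u)) ∧
    (∀ (X Y Y' : C) (v : Y ⟶ Y') (f : X ⟶ Y) (g : Y' ⟶ X⟦n⟧),
      pair X Y' (f ≫ v) g = pair X Y f (v ≫ g))

/-- `T` is `d`-rigid: `Hom(T, T[i]) = 0` for `i = 1, …, d`. -/
def IsDRigid (d : ℤ) (T : C) : Prop := ∀ i : ℤ, 1 ≤ i → i ≤ d → ∀ f : T ⟶ T⟦i⟧, f = 0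

/-- `T` is maximal `d`-rigid. -/
def IsMaxDRigid (d : ℤ) (T : C) : Prop :=
  IsDRigid d T ∧ ∀ Z : C, IsDRigid d (T ⊞ Z) → InAdd T Z

/-- `T` is a `d`-cluster tilting object. -/
def IsDClusterTilting (d : ℤ) (T : C) : Prop :=
  IsDRigid d T ∧
  ∀ X : C, (∀ i : ℤ, 1 ≤ i → i ≤ d → ∀ f : T ⟶ X⟦i⟧, f = 0) → InAdd T X

/-- `X` is a maximal rigid object. -/
def IsMaxRigidObj (X : C) : Prop :=
  IsRigidObj X ∧ ∀ Z : C, IsRigidObj (X ⊞ Z) → InAdd X Z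

/-- The isomorphism setoid on objects of `C` satisfying a predicate `p`. -/
def objSetoid (p : C → Prop) : Setoid {X : C // p X} where
  r X Y := Nonempty (X.1 ≅ Y.1)
  iseqv := ⟨fun _ => ⟨Iso.refl _⟩, fun ⟨e⟩ => ⟨e.symm⟩, fun ⟨e⟩ ⟨f⟩ => ⟨e.trans f⟩⟩

section Modules

variable (Γ : Type w) [Ring Γ]

/-- `f, g` is a minimal projective presentation `P₁ → P₀ → M → 0`:
both `P`s are projective, the sequence is exact with `g` surjective, and the kernels of
`g` and `f` are superfluous submodules (which encodes minimality). -/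
def IsMinProjPres {P₁ P₀ M : Type w} [AddCommGroup P₁] [Module Γ P₁]
    [AddCommGroup P₀] [Module Γ P₀] [AddCommGroup M] [Module Γ M]
    (f : P₁ →ₗ[Γ] P₀) (g : P₀ →ₗ[Γ] M) : Prop :=
  Module.Projective Γ P₁ ∧ Module.Projective Γ P₀ ∧
  Function.Surjective g ∧ Function.Exact f g ∧
  (∀ K : Submodule Γ P₀, LinearMap.ker g ⊔ K = ⊤ → K = ⊤) ∧
  (∀ K : Submodule Γ P₁, LinearMap.ker f ⊔ K = ⊤ → K = ⊤)

/-- `M` is `τ`-rigid, via the Adachi–Iyama–Reiten criterion: for a minimal projective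
presentation `P₁ →f P₀ → M → 0`, the map `Hom(f, M) : Hom(P₀, M) → Hom(P₁, M)` is
surjective. -/
def IsTauRigid (M : Type w) [AddCommGroup M] [Module Γ M] : Prop :=
  ∀ (P₁ P₀ : Type w) [AddCommGroup P₁] [Module Γ P₁] [AddCommGroup P₀] [Module Γ P₀],
    ∀ (f : P₁ →ₗ[Γ] P₀) (g : P₀ →ₗ[Γ] M), IsMinProjPres Γ f g →
    Function.Surjective (fun h : P₀ →ₗ[Γ] M => h ∘ₗ f)

/-- `(M, P)` is a `τ`-rigid pair: `M ∈ mod Γ` is `τ`-rigid, `P` is finitely generated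
projective and `Hom(P, M) = 0`. -/
def IsTauRigidPair (M P : Type w) [AddCommGroup M] [Module Γ M]
    [AddCommGroup P] [Module Γ P] : Prop :=
  Module.Finite Γ M ∧ IsTauRigid Γ M ∧
  Module.Finite Γ P ∧ Module.Projective Γ P ∧ ∀ h : P →ₗ[Γ] M, h = 0

/-- A module is indecomposable. -/
def ModIndec (M : Type w) [AddCommGroup M] [Module Γ M] : Prop :=
  Nontrivial M ∧ ∀ A B : Submodule Γ M, IsCompl A B → A = ⊥ ∨ B = ⊥

/-- An internal decomposition into indecomposable submodules. -/
def IsModDecomp {M : Type w} [AddCommGroup M] [Module Γ M] {n : ℕ}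
    (f : Fin n → Submodule Γ M) : Prop :=
  DirectSum.IsInternal f ∧ ∀ i, ModIndec Γ (f i)

/-- `|M| = n`: `M` has exactly `n` non-isomorphic indecomposable direct summands. -/
def NumIndecMod (M : Type w) [AddCommGroup M] [Module Γ M] (n : ℕ) : Prop :=
  ∃ (m : ℕ) (f : Fin m → Submodule Γ M) (g : Fin n → Submodule Γ M),
    IsModDecomp Γ f ∧ (∀ i, ModIndec Γ (g i)) ∧
    (∀ i j : Fin n, Nonempty (g i ≃ₗ[Γ] g j) → i = j) ∧
    (∀ i : Fin m, ∃ j : Fin n, Nonempty (f i ≃ₗ[Γ] g j)) ∧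
    (∀ j : Fin n, ∃ i : Fin m, Nonempty (f i ≃ₗ[Γ] g j))

/-- `M` is basic: it decomposes into pairwise non-isomorphic indecomposable submodules. -/
def ModBasic (M : Type w) [AddCommGroup M] [Module Γ M] : Prop :=
  ∃ (n : ℕ) (f : Fin n → Submodule Γ M), IsModDecomp Γ f ∧
    ∀ i j : Fin n, Nonempty (f i ≃ₗ[Γ] f j) → i = j

/-- `(M, P)` is a support `τ`-tilting pair: a `τ`-rigid pair with `|M| + |P| = |Γ|`. -/
def IsSuppTauTiltingPair (M P : Type w) [AddCommGroup M] [Module Γ M]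
    [AddCommGroup P] [Module Γ P] : Prop :=
  IsTauRigidPair Γ M P ∧
  ∃ nM nP nΓ : ℕ, NumIndecMod Γ M nM ∧ NumIndecMod Γ P nP ∧ NumIndecMod Γ Γ nΓ ∧
    nM + nP = nΓ

/-- `M` is a support `τ`-tilting module. -/
def IsSuppTauTilting (M : Type w) [AddCommGroup M] [Module Γ M] : Prop :=
  ∃ P : ModuleCat.{w} Γ, ModBasic Γ P ∧ IsSuppTauTiltingPair Γ M P

/-- `M` has projective dimension at most `1`. -/
def PdLeOne (M : Type w) [AddCommGroup M] [Module Γ M] : Prop :=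
  ∃ (P₁ P₀ : ModuleCat.{w} Γ) (f : P₁ →ₗ[Γ] P₀) (g : ↥P₀ →ₗ[Γ] M),
    Module.Projective Γ P₁ ∧ Module.Projective Γ P₀ ∧
    Function.Injective f ∧ Function.Surjective g ∧ Function.Exact f g

/-- `Ext¹_Γ(M, M) = 0`: every self-extension of `M` splits. -/
def SelfExtSplit (M : Type w) [AddCommGroup M] [Module Γ M] : Prop :=
  ∀ (E : ModuleCat.{w} Γ) (i : M →ₗ[Γ] E) (p : ↥E →ₗ[Γ] M),
    Function.Injective i → Function.Surjective p → Function.Exact i p →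
    ∃ r : ↥E →ₗ[Γ] M, r ∘ₗ i = LinearMap.id

/-- `M` is a (basic) tilting module: `M ∈ mod Γ` is basic with `pd M ≤ 1`,
`Ext¹(M, M) = 0` and `|M| = |Γ|`. -/
def IsTiltingMod (M : Type w) [AddCommGroup M] [Module Γ M] : Prop :=
  Module.Finite Γ M ∧ ModBasic Γ M ∧ PdLeOne Γ M ∧ SelfExtSplit Γ M ∧
  ∃ n : ℕ, NumIndecMod Γ M n ∧ NumIndecMod Γ Γ n

/-- The linear-isomorphism setoid on modules satisfying a predicate `p`. -/
def modSetoid (p : ModuleCat.{w} Γ → Prop) : Setoid {M : ModuleCat.{w} Γ // p M} where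
  r M N := Nonempty (↥M.1 ≃ₗ[Γ] ↥N.1)
  iseqv := ⟨fun _ => ⟨LinearEquiv.refl Γ _⟩, fun ⟨e⟩ => ⟨e.symm⟩, fun ⟨e⟩ ⟨f⟩ => ⟨e.trans f⟩⟩

/-- The componentwise linear-isomorphism setoid on pairs of modules satisfying `p`. -/
def pairSetoid (p : ModuleCat.{w} Γ × ModuleCat.{w} Γ → Prop) :
    Setoid {Mp : ModuleCat.{w} Γ × ModuleCat.{w} Γ // p Mp} where
  r A B := Nonempty (↥A.1.1 ≃ₗ[Γ] ↥B.1.1) ∧ Nonempty (↥A.1.2 ≃ₗ[Γ] ↥B.1.2)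
  iseqv := ⟨fun _ => ⟨⟨LinearEquiv.refl Γ _⟩, ⟨LinearEquiv.refl Γ _⟩⟩,
    fun ⟨⟨e⟩, ⟨f⟩⟩ => ⟨⟨e.symm⟩, ⟨f.symm⟩⟩,
    fun ⟨⟨e⟩, ⟨f⟩⟩ ⟨⟨e'⟩, ⟨f'⟩⟩ => ⟨⟨e.trans e'⟩, ⟨f.trans f'⟩⟩⟩

/-- `(M, P)` is a basic `τ`-rigid pair. -/
def BasicTauRigidPair (Mp : ModuleCat.{w} Γ × ModuleCat.{w} Γ) : Prop :=
  IsTauRigidPair Γ ↥Mp.1 ↥Mp.2 ∧ ModBasic Γ ↥Mp.1 ∧ ModBasic Γ ↥Mp.2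

end Modules

end RelRigid

/-!
The bridge between the two notions is 2-Calabi–Yau duality. Let `W₁ ∈ pr(R)` be presented by
`R₁ ⟶ R₀ ⟶ W₁ ⟶ R₁⟦1⟧` with middle map `b`. For `f : W₁ ⟶ W₂⟦1⟧`, duality pairs `b ≫ f` with
the composites `φ ≫ b⟦1⟧ : W₂ ⟶ W₁⟦1⟧`, which factor through `R₀⟦1⟧ ∈ add R⟦1⟧`. So if
`R[1](W₂, W₁[1]) = 0` then `b ≫ f = 0`, hence `f` factors through `R₁⟦1⟧`, and if moreover
`R[1](W₁, W₂[1]) = 0` then `f = 0`: on `pr(R)`, `R[1]`-rigidity is rigidity.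

Conversely every rigid `X` lies in `pr(R)`: complete a right `add R`-approximation `R₀ ⟶ X` to a
triangle `Y ⟶ R₀ ⟶ X ⟶ Y⟦1⟧`; then `R ⊞ Y` is rigid, so `Y ∈ add R` by maximality of `R`.
-/

namespace RelRigid

section Retracts

variable {C : Type u} [Category.{v} C] [Preadditive C] [HasShift C ℤ]

lemma eq_zero_of_retracts {A B P Q : C} {iA : A ⟶ P} {pA : P ⟶ A} (hA : iA ≫ pA = 𝟙 A)
    {iB : B ⟶ Q} {pB : Q ⟶ B} (hB : iB ≫ pB = 𝟙 B) (f : A ⟶ B⟦(1 : ℤ)⟧)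
    (h : pA ≫ f ≫ iB⟦(1 : ℤ)⟧' = 0) : f = 0 := by
  calc f = iA ≫ (pA ≫ f ≫ iB⟦(1 : ℤ)⟧') ≫ pB⟦(1 : ℤ)⟧' := by
        simp [reassoc_of% hA, ← Functor.map_comp, hB]
    _ = 0 := by rw [h, zero_comp, comp_zero]

lemma IsRigidObj.of_isSummand {A P : C} (hP : IsRigidObj P) (hA : IsSummand A P) :
    IsRigidObj A := by
  obtain ⟨i, p, hip⟩ := hA
  exact fun f => eq_zero_of_retracts hip hip f (hP _)

variable [HasFiniteBiproducts C]

lemma eq_zero_of_isRelRigid_of_retracts {R P A B : C} (h : IsRelRigid R P)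
    {iA : A ⟶ P} {pA : P ⟶ A} (hA : iA ≫ pA = 𝟙 A)
    {iB : B ⟶ P} {pB : P ⟶ B} (hB : iB ≫ pB = 𝟙 B)
    (f : A ⟶ B⟦(1 : ℤ)⟧) (hf : FactorsThroughAdd (R⟦(1 : ℤ)⟧) f) : f = 0 := by
  obtain ⟨Z, hZ, g, g', rfl⟩ := hf
  exact eq_zero_of_retracts hA hB _ (h _ ⟨Z, hZ, pA ≫ g, g' ≫ iB⟦(1 : ℤ)⟧', by simp⟩)

end Retracts

lemma eq_zero_of_comp_map_biprod_fst_snd {C D : Type*} [Category C] [Category D] [Preadditive C]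
    [Preadditive D] (F : C ⥤ D) [F.Additive] {W : D} {X Y : C} [HasBinaryBiproduct X Y]
    (f : W ⟶ F.obj (X ⊞ Y)) (h₁ : f ≫ F.map biprod.fst = 0) (h₂ : f ≫ F.map biprod.snd = 0) :
    f = 0 := by
  rw [← Category.comp_id f, ← F.map_id, ← biprod.total]
  simp only [F.map_add, F.map_comp, Preadditive.comp_add, reassoc_of% h₁, reassoc_of% h₂,
    zero_comp, add_zero]

section AddClosure

variable {C : Type u} [Category.{v} C] [Preadditive C] [HasFiniteBiproducts C]

lemma inAdd_biproduct (R : C) (n : ℕ) : InAdd R (⨁ fun _ : Fin n => R) :=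
  ⟨n, 𝟙 _, 𝟙 _, Category.comp_id _⟩

lemma InAdd.eq_zero_of_source {R A Y : C} (hA : InAdd R A) (h : ∀ g : R ⟶ Y, g = 0)
    (f : A ⟶ Y) : f = 0 := by
  obtain ⟨n, s, p, hsp⟩ := hA
  have hp : p ≫ f = 0 := biproduct.hom_ext' _ _ fun i => by simpa using h _
  rw [← Category.id_comp f, ← hsp, Category.assoc, hp, comp_zero]

lemma InAdd.eq_zero_of_target {R A Y : C} (hA : InAdd R A) (h : ∀ g : Y ⟶ R, g = 0)
    (f : Y ⟶ A) : f = 0 := by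
  obtain ⟨n, s, p, hsp⟩ := hA
  have hs : f ≫ s = 0 := biproduct.hom_ext _ _ fun i => by simpa using h _
  rw [← Category.comp_id f, ← hsp, ← Category.assoc, hs, zero_comp]

lemma exists_biproduct_hom_forall_factorsThrough (k : Type*) [Semiring k] [Linear k C]
    (R X : C) [Module.Finite k (R ⟶ X)] :
    ∃ (n : ℕ) (f : (⨁ fun _ : Fin n => R) ⟶ X), ∀ v : R ⟶ X, ∃ w, w ≫ f = v := by
  obtain ⟨n, gens, hspan⟩ := Module.Finite.exists_fin (R := k) (M := R ⟶ X)
  refine ⟨n, biproduct.desc gens, fun v => ?_⟩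
  obtain ⟨c, rfl⟩ := (Submodule.mem_span_range_iff_exists_fun k).mp
    (hspan ▸ Submodule.mem_top : v ∈ Submodule.span k (Set.range gens))
  refine ⟨biproduct.lift fun i => c i • 𝟙 R, ?_⟩
  simp [biproduct.lift_desc]

variable [HasShift C ℤ] [∀ n : ℤ, (shiftFunctor C n).Additive]

lemma InAdd.shift {R A : C} (hA : InAdd R A) (n : ℤ) : InAdd (R⟦n⟧) (A⟦n⟧) := by
  obtain ⟨m, s, p, hsp⟩ := hA
  let e := (shiftFunctor C n).mapBiproduct fun _ : Fin m => R
  refine ⟨m, s⟦n⟧' ≫ e.hom, e.inv ≫ p⟦n⟧', ?_⟩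
  simp [← Functor.map_comp, hsp]

end AddClosure

section CalabiYau

variable {k : Type w} [Field k] {C : Type u} [Category.{v} C] [Preadditive C] [Linear k C]
  [HasShift C ℤ]

lemma IsCalabiYau.comp_eq_zero (hCY : IsCalabiYau (k := k) (C := C) 2) {A' A B : C}
    (u : A' ⟶ A) (f : A ⟶ B⟦(1 : ℤ)⟧) (h : ∀ φ : B ⟶ A'⟦(1 : ℤ)⟧, φ ≫ u⟦(1 : ℤ)⟧' = 0) :
    u ≫ f = 0 := by
  obtain ⟨pair, hbij, hnat, -⟩ := hCY
  apply (hbij A' (B⟦(1 : ℤ)⟧)).injective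
  ext g
  rw [hnat, map_zero, LinearMap.zero_apply]
  suffices g ≫ u⟦(2 : ℤ)⟧' = 0 by rw [this, map_zero]
  -- `e` identifies `⟦2⟧` with `⟦1⟧⟦1⟧`: then `g` is the shift of some `φ`, and `g ≫ u⟦2⟧'` that
  -- of `φ ≫ u⟦1⟧'`.
  let e := shiftFunctorAdd' C (1 : ℤ) 1 2 (by norm_num)
  obtain ⟨φ, hφ⟩ : ∃ φ : B ⟶ A'⟦(1 : ℤ)⟧, φ⟦(1 : ℤ)⟧' = g ≫ e.hom.app A' :=
    ⟨_, Functor.map_preimage _ _⟩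
  rw [← cancel_mono (e.hom.app A), Category.assoc, e.hom.naturality u, ← Category.assoc, ← hφ,
    zero_comp]
  exact (Functor.map_comp _ _ _).symm.trans ((congrArg _ (h φ)).trans (Functor.map_zero _ _ _))

lemma IsCalabiYau.eq_zero_of_forall_eq_zero_swap (hCY : IsCalabiYau (k := k) (C := C) 2)
    {A B : C} (h : ∀ g : B ⟶ A⟦(1 : ℤ)⟧, g = 0) (f : A ⟶ B⟦(1 : ℤ)⟧) : f = 0 := by
  simpa using hCY.comp_eq_zero (𝟙 A) f fun φ => by simp [h φ]

end CalabiYau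

section Triangulated

variable {C : Type u} [Category.{v} C] [Preadditive C] [HasZeroObject C] [HasShift C ℤ]
  [∀ n : ℤ, (shiftFunctor C n).Additive] [Pretriangulated C]

lemma isRigidObj_biprod {A B : C} (hAA : ∀ f : A ⟶ A⟦(1 : ℤ)⟧, f = 0)
    (hAB : ∀ f : A ⟶ B⟦(1 : ℤ)⟧, f = 0) (hBA : ∀ f : B ⟶ A⟦(1 : ℤ)⟧, f = 0)
    (hBB : ∀ f : B ⟶ B⟦(1 : ℤ)⟧, f = 0) : IsRigidObj (A ⊞ B) := fun f =>
  eq_zero_of_comp_map_biprod_fst_snd _ f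
    (biprod.hom_ext' _ _ (by simpa using hAA _) (by simpa using hBA _))
    (biprod.hom_ext' _ _ (by simpa using hAB _) (by simpa using hBB _))

lemma IsRigidObj.of_distTriang {Y B X : C} {g : Y ⟶ B} {f : B ⟶ X} {h : X ⟶ Y⟦(1 : ℤ)⟧}
    (hT : Triangle.mk g f h ∈ distTriang C) (hX : IsRigidObj X)
    (hYB : ∀ u : Y ⟶ B⟦(1 : ℤ)⟧, u = 0) (hBY : ∀ u : B ⟶ Y⟦(1 : ℤ)⟧, u = 0) :
    IsRigidObj Y := by
  intro u
  obtain ⟨w, rfl⟩ : ∃ w : Y ⟶ X, u = w ≫ h := Triangle.coyoneda_exact₁ _ hT u (hYB _)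
  obtain ⟨t, ht⟩ : ∃ t, w⟦(1 : ℤ)⟧' = (-g⟦(1 : ℤ)⟧') ≫ t :=
    Triangle.yoneda_exact₃ _ (rot_of_distTriang _ hT) (w⟦(1 : ℤ)⟧') (hX _)
  obtain ⟨t₀, rfl⟩ : ∃ t₀ : B ⟶ X, t₀⟦(1 : ℤ)⟧' = t := ⟨_, Functor.map_preimage _ _⟩
  have hw : w = -(g ≫ t₀) := (shiftFunctor C (1 : ℤ)).map_injective (by rw [ht]; simp)
  rw [hw, Preadditive.neg_comp, Category.assoc, hBY (t₀ ≫ h), comp_zero, neg_zero]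

end Triangulated

section CalabiYauTriangulated

variable {k : Type w} [Field k] {C : Type u} [Category.{v} C] [Preadditive C] [Linear k C]
  [HasZeroObject C] [HasShift C ℤ] [∀ n : ℤ, (shiftFunctor C n).Additive] [Pretriangulated C]
  [HasFiniteBiproducts C]

lemma IsCalabiYau.inPr_of_isRigidObj (hCY : IsCalabiYau (k := k) (C := C) 2) {R X : C}
    [Module.Finite k (R ⟶ X)] (hR : IsMaxRigidObj R) (hX : IsRigidObj X) : InPr R X := by
  obtain ⟨n, f, hf⟩ := exists_biproduct_hom_forall_factorsThrough k R X
  obtain ⟨Y, g, h, hT⟩ := distinguished_cocone_triangle₁ f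
  have hRY : ∀ v : R ⟶ Y⟦(1 : ℤ)⟧, v = 0 := fun v => by
    obtain ⟨w, rfl⟩ : ∃ w : R ⟶ X, v = w ≫ h := Triangle.coyoneda_exact₁ _ hT v
      (((inAdd_biproduct R n).shift 1).eq_zero_of_target hR.1 _)
    obtain ⟨w', rfl⟩ := hf w
    rw [Category.assoc, show f ≫ h = 0 from comp_distTriang_mor_zero₂₃ _ hT, comp_zero]
  have hBY := (inAdd_biproduct R n).eq_zero_of_source hRY
  have hY : IsRigidObj Y :=
    IsRigidObj.of_distTriang hT hX (hCY.eq_zero_of_forall_eq_zero_swap hBY) hBY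
  have hRY_rigid : IsRigidObj (R ⊞ Y) :=
    isRigidObj_biprod hR.1 hRY (hCY.eq_zero_of_forall_eq_zero_swap hRY) hY
  exact ⟨Y, _, hR.2 Y hRY_rigid, inAdd_biproduct R n, g, f, h, hT⟩

lemma IsCalabiYau.eq_zero_of_inPr (hCY : IsCalabiYau (k := k) (C := C) 2) {R W₁ W₂ : C}
    (hW₁ : InPr R W₁)
    (h₁₂ : ∀ f : W₁ ⟶ W₂⟦(1 : ℤ)⟧, FactorsThroughAdd (R⟦(1 : ℤ)⟧) f → f = 0)
    (h₂₁ : ∀ f : W₂ ⟶ W₁⟦(1 : ℤ)⟧, FactorsThroughAdd (R⟦(1 : ℤ)⟧) f → f = 0)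
    (f : W₁ ⟶ W₂⟦(1 : ℤ)⟧) : f = 0 := by
  obtain ⟨R₁, R₀, hR₁, hR₀, a, b, c, hT⟩ := hW₁
  have hbf : b ≫ f = 0 :=
    hCY.comp_eq_zero b f fun φ => h₂₁ _ ⟨_, hR₀.shift 1, φ, b⟦(1 : ℤ)⟧', rfl⟩
  obtain ⟨t, ht⟩ := Triangle.yoneda_exact₃ _ hT f hbf
  exact h₁₂ f ⟨_, hR₁.shift 1, c, t, ht.symm⟩

lemma IsCalabiYau.isRigidObj_biprod_of_isRelRigid (hCY : IsCalabiYau (k := k) (C := C) 2)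
    {R X Z : C} (hX : InPr R X) (hZ : InPr R Z) (h : IsRelRigid R (X ⊞ Z)) :
    IsRigidObj (X ⊞ Z) := by
  have hrel {A B : C} {iA : A ⟶ X ⊞ Z} {pA : X ⊞ Z ⟶ A} {iB : B ⟶ X ⊞ Z} {pB : X ⊞ Z ⟶ B}
      (hA : iA ≫ pA = 𝟙 A) (hB : iB ≫ pB = 𝟙 B) :=
    eq_zero_of_isRelRigid_of_retracts h hA hB
  have hX' : (biprod.inl : X ⟶ X ⊞ Z) ≫ biprod.fst = 𝟙 X := biprod.inl_fst
  have hZ' : (biprod.inr : Z ⟶ X ⊞ Z) ≫ biprod.snd = 𝟙 Z := biprod.inr_snd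
  exact isRigidObj_biprod (hCY.eq_zero_of_inPr hX (hrel hX' hX') (hrel hX' hX'))
    (hCY.eq_zero_of_inPr hX (hrel hX' hZ') (hrel hZ' hX'))
    (hCY.eq_zero_of_inPr hZ (hrel hZ' hX') (hrel hX' hZ'))
    (hCY.eq_zero_of_inPr hZ (hrel hZ' hZ') (hrel hZ' hZ'))

end CalabiYauTriangulated

variable {k : Type w} [Field k] [IsAlgClosed k]
variable {C : Type u} [Category.{v} C] [Preadditive C] [CategoryTheory.Linear k C]
  [HasZeroObject C] [HasShift C ℤ] [∀ n : ℤ, (shiftFunctor C n).Additive]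
  [Pretriangulated C] [HasFiniteBiproducts C] [IsIdempotentComplete C]
  [∀ X Y : C, Module.Finite k (X ⟶ Y)]

theorem statement18_general (hCY : IsCalabiYau (k := k) (C := C) 2)
    (R : C) (hR : IsMaxRigidObj R) (X : C) :
    IsMaxRelRigid R X ↔ IsMaxRigidObj X := by
  constructor
  · rintro ⟨hXpr, hXrel, hXmax⟩
    refine ⟨hCY.eq_zero_of_inPr hXpr hXrel hXrel, fun Z hXZ => hXmax Z ?_ fun f _ => hXZ f⟩
    exact hCY.inPr_of_isRigidObj hR (hXZ.of_isSummand ⟨biprod.inr, biprod.snd, biprod.inr_snd⟩)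
  · rintro ⟨hX, hXmax⟩
    have hXpr := hCY.inPr_of_isRigidObj hR hX
    exact ⟨hXpr, fun f _ => hX f, fun Z hZpr hXZ =>
      hXmax Z (hCY.isRigidObj_biprod_of_isRelRigid hXpr hZpr hXZ)⟩

/-- **Proposition 4.6.**  Let `C` be a `2`-Calabi–Yau triangulated category and `R` a
basic maximal rigid object.  Then `X` is maximal `R[1]`-rigid with respect to `pr(R)`
if and only if `X` is a maximal rigid object of `C`. -/
theorem statement18 (hCY : IsCalabiYau (k := k) (C := C) 2)
    (R : C) (hRbasic : IsBasic R) (hR : IsMaxRigidObj R) (X : C) :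
    IsMaxRelRigid R X ↔ IsMaxRigidObj X :=
  statement18_general hCY R hR X
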